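/- arXiv:1412.4725 — 4 statements merged into one kernel-verified Lean document; each statement's English description precedes it below -/
import Mathlib

section
/- Let L = FG be an exact factorization with actions (▷, ◁), and let x = fg ∈ L with f ∈ F, g ∈ G. Then the actions (▷ₓ, ◁ₓ) induced from the factorization L = F^x G satisfy b^g ▷ₓ a^g = (b ▷ a)^g and b^g ◁ₓ a^g = (b ◁ a)^g for all a ∈ F, b ∈ G, where z^g = g⁻¹zg. -/
/-- Let `L = FG` be an exact factorization with actions `(▷, ◁)` defined by
`b * a = (b ▷ a) * (b ◁ a)`, and let `x = f * g ∈ L` with `f ∈ F`, `g ∈ G`.  Then the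
actions `(▷ₓ, ◁ₓ)` induced from the factorization `L = Fˣ G` (where `Fˣ = x⁻¹Fx`) satisfy
`b^g ▷ₓ a^g = (b ▷ a)^g` and `b^g ◁ₓ a^g = (b ◁ a)^g` for all `a ∈ F`, `b ∈ G`, where
`z^g = g⁻¹ z g`. -/
theorem stmt_12 (L : Type*) [Group L] [Fintype L] (F G : Subgroup L)
    (hFG : ∀ l : L, ∃ f ∈ F, ∃ g ∈ G, l = f * g) (hdisj : F ⊓ G = ⊥)
    (f g : L) (hf : f ∈ F) (hg : g ∈ G) (x : L) (hx : x = f * g)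
    -- the matched pair actions coming from the factorization `L = FG`
    (tr tl : L → L → L)
    (hdef : ∀ b ∈ G, ∀ a ∈ F, tr b a ∈ F ∧ tl b a ∈ G ∧ b * a = tr b a * tl b a)
    -- the matched pair actions coming from the factorization `L = Fˣ G`
    (trx tlx : L → L → L)
    (hdefx : ∀ b ∈ G, ∀ a' : L, (∃ w ∈ F, a' = x⁻¹ * w * x) →
      (∃ w ∈ F, trx b a' = x⁻¹ * w * x) ∧ tlx b a' ∈ G ∧ b * a' = trx b a' * tlx b a') :
    ∀ a ∈ F, ∀ b ∈ G,
      trx (g⁻¹ * b * g) (g⁻¹ * a * g) = g⁻¹ * tr b a * g ∧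
        tlx (g⁻¹ * b * g) (g⁻¹ * a * g) = g⁻¹ * tl b a * g := by
  intro a ha b hb
  obtain ⟨hF1, hG1, heq1⟩ := hdef b hb a ha
  have ha' : ∃ w ∈ F, g⁻¹ * a * g = x⁻¹ * w * x := by
    refine ⟨f * a * f⁻¹, mul_mem (mul_mem hf ha) (inv_mem hf), ?_⟩
    subst hx; group
  obtain ⟨⟨w, hw, hwx⟩, hu, heq2⟩ := hdefx (g⁻¹ * b * g) (mul_mem (mul_mem (inv_mem hg) hb) hg)
    (g⁻¹ * a * g) ha'
  set T := trx (g⁻¹ * b * g) (g⁻¹ * a * g) with hT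
  set U := tlx (g⁻¹ * b * g) (g⁻¹ * a * g) with hU
  set A := g⁻¹ * tr b a * g with hA
  set B := g⁻¹ * tl b a * g with hB
  have key : T * U = A * B := by
    rw [← heq2, hA, hB]
    have : b * a = tr b a * tl b a := heq1
    calc g⁻¹ * b * g * (g⁻¹ * a * g) = g⁻¹ * (b * a) * g := by group
    _ = g⁻¹ * (tr b a * tl b a) * g := by rw [this]
    _ = g⁻¹ * tr b a * g * (g⁻¹ * tl b a * g) := by group
  -- the candidate F-part of A, conjugated back inside F
  set v := f * tr b a * f⁻¹ with hv
  have hvF : v ∈ F := mul_mem (mul_mem hf hF1) (inv_mem hf)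
  have hAx : A = x⁻¹ * v * x := by rw [hA, hv, hx]; group
  have hz : A⁻¹ * T = B * U⁻¹ := by
    have : T = A * (B * U⁻¹) := by rw [← mul_assoc, ← key]; group
    rw [this]; group
  -- the element f⁻¹ * v⁻¹ * w * f lies in both F and G
  have hmemF : f⁻¹ * v⁻¹ * w * f ∈ F :=
    mul_mem (mul_mem (mul_mem (inv_mem hf) (inv_mem hvF)) hw) hf
  have hconj : g⁻¹ * (f⁻¹ * v⁻¹ * w * f) * g = A⁻¹ * T := by
    rw [hAx, hwx, hx]; group
  have hmemG : f⁻¹ * v⁻¹ * w * f ∈ G := by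
    have h1 : A⁻¹ * T ∈ G := by
      rw [hz]
      exact mul_mem (mul_mem (mul_mem (inv_mem hg) hG1) hg) (inv_mem hu)
    have h2 : f⁻¹ * v⁻¹ * w * f = g * (A⁻¹ * T) * g⁻¹ := by
      rw [← hconj]; group
    rw [h2]
    exact mul_mem (mul_mem hg h1) (inv_mem hg)
  have hone : f⁻¹ * v⁻¹ * w * f = 1 := by
    have : f⁻¹ * v⁻¹ * w * f ∈ F ⊓ G := ⟨hmemF, hmemG⟩
    rw [hdisj] at this
    exact this
  have hwv : w = v := by
    have : v * (f * (f⁻¹ * v⁻¹ * w * f) * f⁻¹) = w := by group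
    rw [hone] at this
    simpa using this.symm
  have hTA : T = A := by rw [hwx, hwv, hAx]
  refine ⟨hTA, ?_⟩
  have : U = B := by
    have := key
    rw [hTA] at this
    exact mul_left_cancel this
  exact this
end

section
/- Let S_n = FG be an exact factorization with F = S_{n−k} (the subgroup fixing {n−k+1,...,n} pointwise) and G sharply k-transitive, with actions (▷, ◁) from the factorization. For g ∈ G with α_i = (n−k+i)^g, the stabilizer {f ∈ F : g ◁ f = g} equals {f ∈ F : α_i^f = α_i for all 1 ≤ i ≤ k}. -/
/-- Let `Sₙ = FG` be an exact factorization with `F = S_{n−k}` (the subgroup fixing the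
last `k` points `n−k+1,...,n` pointwise) and `G` sharply `k`-transitive, with matched pair
actions `(▷, ◁)` coming from the factorization.  For `g ∈ G` with `αᵢ = (n−k+i)^g`, the
stabilizer `{f ∈ F : g ◁ f = g}` equals `{f ∈ F : αᵢ^f = αᵢ for all 1 ≤ i ≤ k}`. -/
theorem stmt_14 (n k : ℕ) (hkn : k ≤ n)
    (F G : Subgroup (Equiv.Perm (Fin n)))
    (hF : ∀ σ : Equiv.Perm (Fin n), σ ∈ F ↔
      ∀ i : Fin k, σ ⟨n - k + i.1, by omega⟩ = ⟨n - k + i.1, by omega⟩)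
    (hsharp : ∀ x y : Fin k → Fin n, Function.Injective x → Function.Injective y →
      ∃! g : G, ∀ i : Fin k, (g : Equiv.Perm (Fin n)) (x i) = y i)
    (hFG : ∀ σ : Equiv.Perm (Fin n), ∃ f ∈ F, ∃ g ∈ G, σ = (g : Equiv.Perm (Fin n)) * f)
    (hdisj : F ⊓ G = ⊥)
    (tr : G → F → F) (tl : G → F → G)
    -- the paper's product `g · f` (apply `g` first, then `f`) is `↑f * ↑g` here, and
    -- its decomposition `(g ▷ f)(g ◁ f)` in `F · G` is `↑(g ◁ f) * ↑(g ▷ f)`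
    (hdef : ∀ (g : G) (f : F),
      (f : Equiv.Perm (Fin n)) * (g : Equiv.Perm (Fin n)) =
        (tl g f : Equiv.Perm (Fin n)) * (tr g f : Equiv.Perm (Fin n))) :
    ∀ (g : G) (f : F),
      tl g f = g ↔ ∀ i : Fin k,
        (f : Equiv.Perm (Fin n)) ((g : Equiv.Perm (Fin n)) ⟨n - k + i.1, by omega⟩) =
          (g : Equiv.Perm (Fin n)) ⟨n - k + i.1, by omega⟩ := by

  intro g f
  have key : ∀ i : Fin k,
      (f : Equiv.Perm (Fin n)) ((g : Equiv.Perm (Fin n)) ⟨n - k + i.1, by omega⟩) =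
        (tl g f : Equiv.Perm (Fin n)) ⟨n - k + i.1, by omega⟩ := by
    intro i
    have h1 := congrFun (congrArg (fun σ : Equiv.Perm (Fin n) => (σ : Fin n → Fin n))
      (hdef g f)) ⟨n - k + i.1, by omega⟩
    have h2 : (tr g f : Equiv.Perm (Fin n)) ⟨n - k + i.1, by omega⟩ = ⟨n - k + i.1, by omega⟩ :=
      (hF _).1 (tr g f).2 i
    simpa [Equiv.Perm.mul_apply, h2] using h1
  constructor
  · intro h i
    rw [key i, h]
  · intro h
    have hp : Function.Injective (fun i : Fin k => (⟨n - k + i.1, by omega⟩ : Fin n)) := by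
      intro a b hab
      simp only [Fin.mk.injEq] at hab
      exact Fin.ext (by omega)
    have hy : Function.Injective
        (fun i : Fin k => (g : Equiv.Perm (Fin n)) ⟨n - k + i.1, by omega⟩) :=
      fun a b hab => hp ((g : Equiv.Perm (Fin n)).injective hab)
    obtain ⟨u, hu, huniq⟩ := hsharp (fun i : Fin k => (⟨n - k + i.1, by omega⟩ : Fin n))
      (fun i : Fin k => (g : Equiv.Perm (Fin n)) ⟨n - k + i.1, by omega⟩) hp hy
    have e1 : tl g f = u := huniq (tl g f) (fun i => by rw [← key i]; exact h i)
    have e2 : g = u := huniq g (fun i => rfl)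
    rw [e1, e2]
end

section
/- For σ ∈ S_n, let φ(m) denote the number of permutations of S_n with exactly m fixed points. Then Σ_{m=0}^n φ(m) = n!, Σ_{m=0}^n m·φ(m) = n!, Σ_{m=0}^n m²·φ(m) = 2·n!, and Σ_{m=0}^n m³·φ(m) = 5·n! (the last two for n ≥ 2 and n ≥ 3 respectively). -/
open scoped BigOperators

open Finset Equiv

lemma countFix (n : ℕ) (s : Finset (Fin n)) :
    (Finset.univ.filter fun σ : Equiv.Perm (Fin n) => ∀ x ∈ s, σ x = x).card
      = (n - s.card).factorial := by
  have e1 : {σ : Equiv.Perm (Fin n) // ∀ x ∈ s, σ x = x} ≃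
      Equiv.Perm {x : Fin n // x ∉ s} := by
    refine (Equiv.subtypeEquiv (Equiv.refl _) ?_).trans
      (Equiv.Perm.subtypeEquivSubtypePerm (fun x => x ∉ s)).symm
    intro σ
    simp only [Equiv.refl_apply]
    constructor
    · intro h a ha; exact h a (not_not.mp ha)
    · intro h a ha; exact h a (fun hn => hn ha)
  have h2 : Fintype.card {x : Fin n // x ∉ s} = n - s.card := by
    simp [Fintype.card_subtype_compl]
  calc (Finset.univ.filter fun σ : Equiv.Perm (Fin n) => ∀ x ∈ s, σ x = x).card
      = Fintype.card {σ : Equiv.Perm (Fin n) // ∀ x ∈ s, σ x = x} := by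
        rw [Fintype.card_subtype]
    _ = Fintype.card (Equiv.Perm {x : Fin n // x ∉ s}) := Fintype.card_congr e1
    _ = (n - s.card).factorial := by rw [Fintype.card_perm, h2]

lemma ite3 (P Q R : Prop) [Decidable P] [Decidable Q] [Decidable R] :
    (if P ∧ Q ∧ R then (1:ℕ) else 0)
      = (if P then 1 else 0) * ((if Q then 1 else 0) * (if R then 1 else 0)) := by
  by_cases h1 : P <;> by_cases h2 : Q <;> by_cases h3 : R <;> simp [h1, h2, h3]

lemma ite2 (P Q : Prop) [Decidable P] [Decidable Q] :
    (if P ∧ Q then (1:ℕ) else 0) = (if P then 1 else 0) * (if Q then 1 else 0) := by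
  by_cases h1 : P <;> by_cases h2 : Q <;> simp [h1, h2]

lemma E2 (n : ℕ) (x : Fin n) :
    ∑ z : Fin n, (n - ({x, z} : Finset (Fin n)).card).factorial
      = (n-1).factorial + (n-1) * (n-2).factorial := by
  rw [← Finset.sum_add_sum_compl ({x} : Finset (Fin n))]
  have h1 : ∑ z ∈ ({x} : Finset (Fin n)), (n - ({x, z} : Finset (Fin n)).card).factorial
      = (n-1).factorial := by
    rw [Finset.sum_singleton]
    congr 2
    simp
  have step : ∀ z ∈ ({x} : Finset (Fin n))ᶜ,
      (n - ({x, z} : Finset (Fin n)).card).factorial = (n-2).factorial := by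
    intro z hz
    have hzx : z ≠ x := by simpa using hz
    congr 2
    rw [Finset.card_insert_of_notMem (by simp [hzx.symm] : x ∉ ({z} : Finset (Fin n)))]
    simp
  have h2 : ∑ z ∈ ({x} : Finset (Fin n))ᶜ, (n - ({x, z} : Finset (Fin n)).card).factorial
      = (n-1) * (n-2).factorial := by
    rw [Finset.sum_congr rfl step, Finset.sum_const, Finset.card_compl]
    simp [smul_eq_mul]
  rw [h1, h2]

lemma E3 (n : ℕ) (x y : Fin n) (hxy : x ≠ y) :
    ∑ z : Fin n, (n - ({x, y, z} : Finset (Fin n)).card).factorial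
      = 2 * (n-2).factorial + (n-2) * (n-3).factorial := by
  rw [← Finset.sum_add_sum_compl ({x, y} : Finset (Fin n))]
  have hcard2 : ({x, y} : Finset (Fin n)).card = 2 := Finset.card_pair hxy
  have h1 : ∑ z ∈ ({x, y} : Finset (Fin n)), (n - ({x, y, z} : Finset (Fin n)).card).factorial
      = 2 * (n-2).factorial := by
    rw [Finset.sum_pair hxy]
    have e1 : ({x, y, x} : Finset (Fin n)) = {x, y} := by
      ext w; simp only [Finset.mem_insert, Finset.mem_singleton]; tauto
    have e2 : ({x, y, y} : Finset (Fin n)) = {x, y} := by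
      ext w; simp only [Finset.mem_insert, Finset.mem_singleton]; tauto
    rw [e1, e2, hcard2]
    ring
  have step : ∀ z ∈ ({x, y} : Finset (Fin n))ᶜ,
      (n - ({x, y, z} : Finset (Fin n)).card).factorial = (n-3).factorial := by
    intro z hz
    have hz' : z ≠ x ∧ z ≠ y := by simpa using hz
    congr 2
    rw [show ({x, y, z} : Finset (Fin n)) = insert z {x, y} by
      ext w; simp only [Finset.mem_insert, Finset.mem_singleton]; tauto]
    rw [Finset.card_insert_of_notMem (by simp [hz'.1, hz'.2]), hcard2]
  have h2 : ∑ z ∈ ({x, y} : Finset (Fin n))ᶜ, (n - ({x, y, z} : Finset (Fin n)).card).factorial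
      = (n-2) * (n-3).factorial := by
    rw [Finset.sum_congr rfl step, Finset.sum_const, Finset.card_compl]
    simp [smul_eq_mul, hcard2]
  rw [h1, h2]

lemma key1 (n : ℕ) (x : Fin n) :
    (∑ σ : Equiv.Perm (Fin n), if σ x = x then (1:ℕ) else 0)
      = (n - 1).factorial := by
  rw [← Finset.card_filter]
  have : (Finset.univ.filter fun σ : Equiv.Perm (Fin n) => σ x = x)
      = Finset.univ.filter fun σ : Equiv.Perm (Fin n) => ∀ w ∈ ({x} : Finset (Fin n)), σ w = w := by
    apply Finset.filter_congr; intro σ _; simp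
  rw [this, countFix]
  simp

lemma key2 (n : ℕ) (x y : Fin n) :
    (∑ σ : Equiv.Perm (Fin n), if σ x = x ∧ σ y = y then (1:ℕ) else 0)
      = (n - ({x, y} : Finset (Fin n)).card).factorial := by
  rw [← Finset.card_filter]
  have : (Finset.univ.filter fun σ : Equiv.Perm (Fin n) => σ x = x ∧ σ y = y)
      = Finset.univ.filter fun σ : Equiv.Perm (Fin n) => ∀ w ∈ ({x, y} : Finset (Fin n)), σ w = w := by
    apply Finset.filter_congr; intro σ _; simp
  rw [this, countFix]

lemma key3 (n : ℕ) (x y z : Fin n) :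
    (∑ σ : Equiv.Perm (Fin n), if σ x = x ∧ σ y = y ∧ σ z = z then (1:ℕ) else 0)
      = (n - ({x, y, z} : Finset (Fin n)).card).factorial := by
  rw [← Finset.card_filter]
  have : (Finset.univ.filter fun σ : Equiv.Perm (Fin n) => σ x = x ∧ σ y = y ∧ σ z = z)
      = Finset.univ.filter fun σ : Equiv.Perm (Fin n) => ∀ w ∈ ({x, y, z} : Finset (Fin n)), σ w = w := by
    apply Finset.filter_congr; intro σ _; simp
  rw [this, countFix]

lemma M1 (n : ℕ) :
    ∑ σ : Equiv.Perm (Fin n), (Finset.univ.filter fun x : Fin n => σ x = x).card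
      = n * (n-1).factorial := by
  simp only [Finset.card_filter]
  rw [Finset.sum_comm, Finset.sum_congr rfl (fun x _ => key1 n x), Finset.sum_const,
    Finset.card_univ, Fintype.card_fin, smul_eq_mul]

lemma M2 (n : ℕ) :
    ∑ σ : Equiv.Perm (Fin n), ((Finset.univ.filter fun x : Fin n => σ x = x).card)^2
      = n * ((n-1).factorial + (n-1) * (n-2).factorial) := by
  have expand : ∀ σ : Equiv.Perm (Fin n),
      ((Finset.univ.filter fun x : Fin n => σ x = x).card)^2
        = ∑ x : Fin n, ∑ y : Fin n, if σ x = x ∧ σ y = y then (1:ℕ) else 0 := by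
    intro σ
    simp only [ite2, ← Finset.mul_sum, ← Finset.sum_mul, Finset.card_filter]
    ring
  rw [Finset.sum_congr rfl (fun σ _ => expand σ), Finset.sum_comm]
  rw [Finset.sum_congr rfl (fun x _ => Finset.sum_comm)]
  simp only [key2]
  rw [Finset.sum_congr rfl (fun x _ => E2 n x)]
  simp [mul_comm]

lemma M3 (n : ℕ) :
    ∑ σ : Equiv.Perm (Fin n), ((Finset.univ.filter fun x : Fin n => σ x = x).card)^3
      = n * (((n-1).factorial + (n-1) * (n-2).factorial)
        + (n-1) * (2 * (n-2).factorial + (n-2) * (n-3).factorial)) := by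
  have expand : ∀ σ : Equiv.Perm (Fin n),
      ((Finset.univ.filter fun x : Fin n => σ x = x).card)^3
        = ∑ x : Fin n, ∑ y : Fin n, ∑ z : Fin n,
            if σ x = x ∧ σ y = y ∧ σ z = z then (1:ℕ) else 0 := by
    intro σ
    simp only [ite3, ← Finset.mul_sum, ← Finset.sum_mul, Finset.card_filter]
    ring
  rw [Finset.sum_congr rfl (fun σ _ => expand σ), Finset.sum_comm]
  have swap2 : ∀ x : Fin n,
      (∑ σ : Equiv.Perm (Fin n), ∑ y : Fin n, ∑ z : Fin n,
          if σ x = x ∧ σ y = y ∧ σ z = z then (1:ℕ) else 0)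
      = ∑ y : Fin n, ∑ z : Fin n, (n - ({x, y, z} : Finset (Fin n)).card).factorial := by
    intro x
    rw [Finset.sum_comm]
    refine Finset.sum_congr rfl (fun y _ => ?_)
    rw [Finset.sum_comm]
    exact Finset.sum_congr rfl (fun z _ => key3 n x y z)
  rw [Finset.sum_congr rfl (fun x _ => swap2 x)]
  have inner : ∀ x : Fin n,
      (∑ y : Fin n, ∑ z : Fin n, (n - ({x, y, z} : Finset (Fin n)).card).factorial)
      = ((n-1).factorial + (n-1) * (n-2).factorial)
        + (n-1) * (2 * (n-2).factorial + (n-2) * (n-3).factorial) := by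
    intro x
    rw [← Finset.sum_add_sum_compl ({x} : Finset (Fin n))]
    have hx : ∑ y ∈ ({x} : Finset (Fin n)), ∑ z : Fin n,
        (n - ({x, y, z} : Finset (Fin n)).card).factorial
        = (n-1).factorial + (n-1) * (n-2).factorial := by
      rw [Finset.sum_singleton]
      have : ∀ z : Fin n, ({x, x, z} : Finset (Fin n)) = {x, z} := by
        intro z; ext w; simp only [Finset.mem_insert, Finset.mem_singleton]; tauto
      rw [Finset.sum_congr rfl (fun z _ => by rw [this z])]
      exact E2 n x
    have hy : ∑ y ∈ ({x} : Finset (Fin n))ᶜ, ∑ z : Fin n,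
        (n - ({x, y, z} : Finset (Fin n)).card).factorial
        = (n-1) * (2 * (n-2).factorial + (n-2) * (n-3).factorial) := by
      have step : ∀ y ∈ ({x} : Finset (Fin n))ᶜ, (∑ z : Fin n,
          (n - ({x, y, z} : Finset (Fin n)).card).factorial)
          = 2 * (n-2).factorial + (n-2) * (n-3).factorial := by
        intro y hy
        have hyx : y ≠ x := by simpa using hy
        exact E3 n x y hyx.symm
      rw [Finset.sum_congr rfl step, Finset.sum_const, Finset.card_compl]
      simp [smul_eq_mul]
    rw [hx, hy]
  rw [Finset.sum_congr rfl (fun x _ => inner x)]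
  simp [mul_comm]

lemma reduce (n : ℕ) (φ : ℕ → ℕ)
    (hφ : ∀ m, φ m = (Finset.univ.filter fun σ : Equiv.Perm (Fin n) =>
      (Finset.univ.filter fun x : Fin n => σ x = x).card = m).card)
    (w : ℕ → ℕ) :
    ∑ m ∈ Finset.range (n + 1), w m * φ m
      = ∑ σ : Equiv.Perm (Fin n), w ((Finset.univ.filter fun x : Fin n => σ x = x).card) := by
  have hmap : ∀ σ ∈ (Finset.univ : Finset (Equiv.Perm (Fin n))),
      (Finset.univ.filter fun x : Fin n => σ x = x).card ∈ Finset.range (n + 1) := by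
    intro σ _
    rw [Finset.mem_range, Nat.lt_succ_iff]
    calc (Finset.univ.filter fun x : Fin n => σ x = x).card
        ≤ (Finset.univ : Finset (Fin n)).card := Finset.card_filter_le _ _
      _ = n := by simp
  rw [← Finset.sum_fiberwise_of_maps_to hmap
    (fun σ => w ((Finset.univ.filter fun x : Fin n => σ x = x).card))]
  refine Finset.sum_congr rfl (fun m _ => ?_)
  rw [hφ m,
    Finset.sum_congr rfl (fun σ hσ => by rw [(Finset.mem_filter.mp hσ).2]),
    Finset.sum_const, smul_eq_mul, mul_comm]

/-- For `σ ∈ Sₙ`, let `φ(m)` denote the number of permutations of `Sₙ` with exactly `m`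
fixed points.  Then `Σ φ(m) = n!`, `Σ m·φ(m) = n!` (for `n ≥ 1`), `Σ m²·φ(m) = 2·n!`
(for `n ≥ 2`) and `Σ m³·φ(m) = 5·n!` (for `n ≥ 3`). -/
theorem stmt_15 (n : ℕ) (φ : ℕ → ℕ)
    (hφ : ∀ m, φ m = (Finset.univ.filter fun σ : Equiv.Perm (Fin n) =>
      (Finset.univ.filter fun x : Fin n => σ x = x).card = m).card) :
    (∑ m ∈ Finset.range (n + 1), φ m = n.factorial) ∧
      (1 ≤ n → ∑ m ∈ Finset.range (n + 1), m * φ m = n.factorial) ∧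
      (2 ≤ n → ∑ m ∈ Finset.range (n + 1), m ^ 2 * φ m = 2 * n.factorial) ∧
      (3 ≤ n → ∑ m ∈ Finset.range (n + 1), m ^ 3 * φ m = 5 * n.factorial) := by
  refine ⟨?_, ?_, ?_, ?_⟩
  · have h := reduce n φ hφ (fun _ => 1)
    simp only [one_mul] at h
    rw [h, Finset.sum_const, Finset.card_univ, Fintype.card_perm, Fintype.card_fin,
      smul_eq_mul, mul_one]
  · intro hn
    obtain ⟨m, rfl⟩ : ∃ m, n = m + 1 := ⟨n - 1, by omega⟩
    rw [reduce _ φ hφ (fun k => k), M1]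
    simp [Nat.factorial_succ]
  · intro hn
    obtain ⟨m, rfl⟩ : ∃ m, n = m + 2 := ⟨n - 2, by omega⟩
    rw [reduce _ φ hφ (fun k => k ^ 2), M2]
    show (m + 2) * ((m+1).factorial + (m+1) * m.factorial) = 2 * (m+2).factorial
    simp only [Nat.factorial_succ]
    ring
  · intro hn
    obtain ⟨m, rfl⟩ : ∃ m, n = m + 3 := ⟨n - 3, by omega⟩
    rw [reduce _ φ hφ (fun k => k ^ 3), M3]
    show (m + 3) * (((m+2).factorial + (m+2) * (m+1).factorial)
      + (m+2) * (2 * (m+1).factorial + (m+1) * m.factorial)) = 5 * (m+3).factorial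
    simp only [Nat.factorial_succ]
    ring
end

section
/- Let S_n = FG be an exact factorization with F = S_{n−k} fixing {n−k+1,...,n} pointwise and G sharply k-transitive (2 ≤ 2k < n). For g ∈ G write α_i = (n−k+i)^g. Then the F-orbit of g under the action ◁ consists exactly of all g' ∈ G such that {i : (n−k+i)^{g'} ∈ {1,...,n−k}} = {i : α_i ∈ {1,...,n−k}} and (n−k+j)^{g'} = α_j for all j with α_j ∈ {n−k+1,...,n}. -/
/-- Let `Sₙ = FG` be an exact factorization with `F = S_{n−k}` fixing `{n−k+1,...,n}`
pointwise and `G` sharply `k`-transitive (`2 ≤ 2k < n`).  For `g ∈ G` write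
`αᵢ = (n−k+i)^g`.  Then the `F`-orbit of `g` under the action `◁` consists exactly of all
`g' ∈ G` such that `{i : (n−k+i)^{g'} ∈ Γ} = {i : αᵢ ∈ Γ}` (where `Γ = {1,...,n−k}`)
and `(n−k+j)^{g'} = α_j` for all `j` with `α_j ∈ Δ = {n−k+1,...,n}`. -/
theorem stmt_19 (n k : ℕ) (hk : 1 ≤ k) (hkn : 2 * k < n)
    (F G : Subgroup (Equiv.Perm (Fin n)))
    (hF : ∀ σ : Equiv.Perm (Fin n), σ ∈ F ↔
      ∀ i : Fin k, σ ⟨n - k + i.1, by omega⟩ = ⟨n - k + i.1, by omega⟩)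
    (hsharp : ∀ x y : Fin k → Fin n, Function.Injective x → Function.Injective y →
      ∃! g : G, ∀ i : Fin k, (g : Equiv.Perm (Fin n)) (x i) = y i)
    (hFG : ∀ σ : Equiv.Perm (Fin n), ∃ f ∈ F, ∃ g ∈ G, σ = (g : Equiv.Perm (Fin n)) * f)
    (hdisj : F ⊓ G = ⊥)
    (tr : G → F → F) (tl : G → F → G)
    -- the paper's product `g · f` (apply `g` first, then `f`) is `↑f * ↑g` here, and
    -- its decomposition `(g ▷ f)(g ◁ f)` in `F · G` is `↑(g ◁ f) * ↑(g ▷ f)`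
    (hdef : ∀ (g : G) (f : F),
      (f : Equiv.Perm (Fin n)) * (g : Equiv.Perm (Fin n)) =
        (tl g f : Equiv.Perm (Fin n)) * (tr g f : Equiv.Perm (Fin n))) :
    ∀ g g' : G,
      (∃ f : F, tl g f = g') ↔
        ((∀ i : Fin k,
            ((g' : Equiv.Perm (Fin n)) ⟨n - k + i.1, by omega⟩).1 < n - k ↔
              ((g : Equiv.Perm (Fin n)) ⟨n - k + i.1, by omega⟩).1 < n - k) ∧
          (∀ j : Fin k,
            n - k ≤ ((g : Equiv.Perm (Fin n)) ⟨n - k + j.1, by omega⟩).1 →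
              (g' : Equiv.Perm (Fin n)) ⟨n - k + j.1, by omega⟩ =
                (g : Equiv.Perm (Fin n)) ⟨n - k + j.1, by omega⟩)) := by
  classical
  intro g g'
  -- the Δ-points
  set x : Fin k → Fin n := fun i => ⟨n - k + i.1, by omega⟩ with hx
  have hxinj : Function.Injective x := by
    intro i j hij
    have : n - k + i.1 = n - k + j.1 := congrArg Fin.val hij
    exact Fin.ext (by omega)
  -- any element of F fixes every point with value ≥ n - k
  have hfixΔ : ∀ f : Equiv.Perm (Fin n), f ∈ F → ∀ b : Fin n, n - k ≤ b.1 → f b = b := by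
    intro f hf b hb
    have hj : b.1 - (n - k) < k := by omega
    have := (hF f).mp hf ⟨b.1 - (n - k), hj⟩
    have hb' : (⟨n - k + (b.1 - (n - k)), by omega⟩ : Fin n) = b := by
      apply Fin.ext
      show n - k + (b.1 - (n - k)) = b.1
      omega
    rwa [hb'] at this
  -- any element of F preserves Γ
  have hΓ : ∀ f : Equiv.Perm (Fin n), f ∈ F → ∀ a : Fin n, a.1 < n - k → (f a).1 < n - k := by
    intro f hf a ha
    by_contra hcon
    push_neg at hcon
    have h1 := hfixΔ f hf (f a) hcon
    have : f a = a := f.injective h1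
    omega
  constructor
  · -- forward
    rintro ⟨f, rfl⟩
    have key : ∀ i : Fin k,
        ((tl g f : Equiv.Perm (Fin n))) (x i) = (f : Equiv.Perm (Fin n)) ((g : Equiv.Perm (Fin n)) (x i)) := by
      intro i
      have h := hdef g f
      have h2 := congrArg (fun σ : Equiv.Perm (Fin n) => σ (x i)) h
      simp only [Equiv.Perm.mul_apply] at h2
      have htr : (tr g f : Equiv.Perm (Fin n)) (x i) = x i :=
        hfixΔ _ (tr g f).2 (x i) (by simp [hx])
      rw [htr] at h2
      exact h2.symm
    constructor
    · intro i
      rw [key i]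
      constructor
      · intro h
        by_contra hcon
        push_neg at hcon
        have := hfixΔ f f.2 _ hcon
        rw [this] at h
        omega
      · intro h
        exact hΓ f f.2 _ h
    · intro j hj
      rw [key j]
      exact hfixΔ f f.2 _ hj
  · -- backward
    rintro ⟨h1, h2⟩
    -- construct the permutation f
    set p : Fin n → Prop := fun a => a.1 < n - k with hp
    -- indices whose g-image lies in Γ
    set I := {i : Fin k // ((g : Equiv.Perm (Fin n)) (x i)).1 < n - k} with hI
    set u : I → {a : Fin n // p a} := fun i => ⟨(g : Equiv.Perm (Fin n)) (x i.1), i.2⟩ with hu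
    set v : I → {a : Fin n // p a} :=
      fun i => ⟨(g' : Equiv.Perm (Fin n)) (x i.1), (h1 i.1).mpr i.2⟩ with hv
    have huinj : Function.Injective u := by
      intro i j hij
      have : (g : Equiv.Perm (Fin n)) (x i.1) = (g : Equiv.Perm (Fin n)) (x j.1) :=
        congrArg Subtype.val hij
      exact Subtype.ext (hxinj ((g : Equiv.Perm (Fin n)).injective this))
    have hvinj : Function.Injective v := by
      intro i j hij
      have : (g' : Equiv.Perm (Fin n)) (x i.1) = (g' : Equiv.Perm (Fin n)) (x j.1) :=
        congrArg Subtype.val hij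
      exact Subtype.ext (hxinj ((g' : Equiv.Perm (Fin n)).injective this))
    set e : Set.range u ≃ Set.range v :=
      (Equiv.ofInjective u huinj).symm.trans (Equiv.ofInjective v hvinj) with he
    set τ : Equiv.Perm {a : Fin n // p a} := e.extendSubtype with hτ
    set f : Equiv.Perm (Fin n) := Equiv.Perm.ofSubtype τ with hf
    have hfmem : f ∈ F := by
      rw [hF]
      intro i
      apply Equiv.Perm.ofSubtype_apply_of_not_mem
      simp only [hp]
      omega
    have hfval : ∀ i : Fin k,
        f ((g : Equiv.Perm (Fin n)) (x i)) = (g' : Equiv.Perm (Fin n)) (x i) := by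
      intro i
      by_cases hcase : ((g : Equiv.Perm (Fin n)) (x i)).1 < n - k
      · set i' : I := ⟨i, hcase⟩ with hi'
        have hmem : p ((g : Equiv.Perm (Fin n)) (x i)) := hcase
        rw [hf, Equiv.Perm.ofSubtype_apply_of_mem τ hmem]
        have hux : (⟨(g : Equiv.Perm (Fin n)) (x i), hmem⟩ : {a : Fin n // p a}) = u i' := rfl
        have hmem2 : u i' ∈ Set.range u := ⟨i', rfl⟩
        have hτval : τ (u i') = e ⟨u i', hmem2⟩ :=
          Equiv.extendSubtype_apply_of_mem e (u i') hmem2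
        have he1 : (Equiv.ofInjective u huinj).symm ⟨u i', hmem2⟩ = i' := by
          rw [Equiv.symm_apply_eq]
          rfl
        have he2 : e ⟨u i', hmem2⟩ = ⟨v i', ⟨i', rfl⟩⟩ := by
          rw [he, Equiv.trans_apply, he1]
          rfl
        rw [hux, hτval, he2]
      · push_neg at hcase
        have := h2 i hcase
        rw [this]
        rw [hf, Equiv.Perm.ofSubtype_apply_of_not_mem]
        exact not_lt.mpr hcase
    refine ⟨⟨f, hfmem⟩, ?_⟩
    -- both tl g f and g' map x i to g' (x i); use sharp transitivity
    have htl : ∀ i : Fin k,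
        ((tl g ⟨f, hfmem⟩ : G) : Equiv.Perm (Fin n)) (x i) = (g' : Equiv.Perm (Fin n)) (x i) := by
      intro i
      have h := hdef g ⟨f, hfmem⟩
      have h2' := congrArg (fun σ : Equiv.Perm (Fin n) => σ (x i)) h
      simp only [Equiv.Perm.mul_apply] at h2'
      have htr : (tr g ⟨f, hfmem⟩ : Equiv.Perm (Fin n)) (x i) = x i :=
        hfixΔ _ (tr g ⟨f, hfmem⟩).2 (x i) (by simp [hx])
      rw [htr] at h2'
      rw [← h2']
      exact hfval i
    have hyinj : Function.Injective (fun i => (g' : Equiv.Perm (Fin n)) (x i)) := by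
      intro i j hij
      exact hxinj ((g' : Equiv.Perm (Fin n)).injective hij)
    obtain ⟨w, hw, huniq⟩ := hsharp x (fun i => (g' : Equiv.Perm (Fin n)) (x i)) hxinj hyinj
    have e1 : tl g ⟨f, hfmem⟩ = w := huniq _ htl
    have e2 : g' = w := huniq _ (fun i => rfl)
    rw [e1, e2]
end
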